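/- Let R be a set of atoms of Π(X) whose associated graph G_R is a single cycle with m ≥ 3 edges. Then the number of distinct partitions of X expressible as the join of some subset of R equals 2^m − m. -/

import Mathlib

/-! The join of a set `T` of atoms is the partition of `X` into the connected components of the
graph with edge set `T`. Deleting one edge of a cycle leaves its ends connected, so `R` and the
`m` sets `R \ {s}` all have the join `sSup R`. Deleting two edges leaves the ends of each
deleted edge disconnected, since a path between them would close a second cycle; so for the
other `2^m - (m + 1)` subsets `T` is recovered from its join as the atoms of `R` below it. -/

variable {X : Type*} [Fintype X] [DecidableEq X]

/-- The atom of the partition lattice whose only nonsingleton block is `{x, y}`. -/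
def pairSetoid (x y : X) : Setoid X where
  r a b := a = b ∨ (a = x ∧ b = y) ∨ (a = y ∧ b = x)
  iseqv := by
    refine ⟨fun a => Or.inl rfl, ?_, ?_⟩
    · intro a b h; tauto
    · intro a b c h1 h2; aesop

/-- `S` is an atomic decomposition of the partition `π`. -/
def IsAtomicDecomp (π : Setoid X) (S : Set (Setoid X)) : Prop :=
  (∀ a ∈ S, IsAtom a) ∧ sSup S = π

/-- `S` is a minimal atomic decomposition of `π`. -/
def IsMinAtomicDecomp (π : Setoid X) (S : Set (Setoid X)) : Prop :=
  IsAtomicDecomp π S ∧ ∀ T ⊂ S, ¬ IsAtomicDecomp π T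

/-- `𝔑 π`: the number of minimal atomic decompositions of `π`. -/
noncomputable def numMinDecomp (π : Setoid X) : ℕ :=
  {S | IsMinAtomicDecomp π S}.ncard

/-- The graph on `X` whose edges are the nonsingleton blocks of the atoms in `S`. -/
def atomGraph (S : Set (Setoid X)) : SimpleGraph X where
  Adj a b := a ≠ b ∧ pairSetoid a b ∈ S
  symm := by
    constructor
    intro a b ⟨h1, h2⟩
    refine ⟨h1.symm, ?_⟩
    have h : pairSetoid b a = pairSetoid a b := by
      apply Setoid.ext; intro u v
      show _ ∨ _ ↔ _ ∨ _; tauto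
    rw [h]; exact h2
  loopless := by constructor; intro a ⟨h, _⟩; exact h rfl

namespace Set

variable {α β : Type*}

lemma ncard_image_eq_of_injOn_sdiff {f : α → β} {A B : Set α} {b : α} (hA : A.Finite)
    (hBA : B ⊆ A) (hb : b ∈ B) (hB : ∀ x ∈ B, f x = f b) (hinj : InjOn f (A \ B))
    (hout : ∀ x ∈ A \ B, f x ≠ f b) : (f '' A).ncard = A.ncard - B.ncard + 1 := by
  have himage : f '' A = insert (f b) (f '' (A \ B)) := by
    refine subset_antisymm ?_ (insert_subset ⟨b, hBA hb, rfl⟩ (image_mono sdiff_subset))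
    rintro _ ⟨x, hx, rfl⟩
    by_cases hxB : x ∈ B
    exacts [Or.inl (hB x hxB), Or.inr ⟨x, ⟨hx, hxB⟩, rfl⟩]
  have hfb : f b ∉ f '' (A \ B) := fun ⟨x, hx, hfx⟩ => hout x hx hfx
  rw [himage, ncard_insert_of_notMem hfb ((hA.subset sdiff_subset).image f), hinj.ncard_image,
    ncard_sdiff hBA (hA.subset hBA)]

variable {R T : Set α}

lemma ncard_insert_image_sdiff_singleton (hR : R.Finite) :
    (insert R ((fun s => R \ {s}) '' R)).ncard = R.ncard + 1 := by
  have hinj : InjOn (fun s => R \ {s}) R := fun s hs t _ hst => by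
    by_contra hne
    have hs' : s ∈ R \ {t} := ⟨hs, hne⟩
    rw [← show R \ {s} = R \ {t} from hst] at hs'
    exact hs'.2 rfl
  have hnotMem : R ∉ (fun s => R \ {s}) '' R :=
    fun ⟨s, hs, h⟩ => (sdiff_singleton_ssubset.mpr hs).ne h
  rw [ncard_insert_of_notMem hnotMem (hR.image _), hinj.ncard_image]

lemma nontrivial_sdiff_of_notMem_insert_image (hTR : T ⊆ R)
    (hT : T ∉ insert R ((fun s => R \ {s}) '' R)) : (R \ T).Nontrivial := by
  refine not_subsingleton_iff.mp fun hsub => hT ?_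
  rcases hsub.eq_empty_or_singleton with h | ⟨s, hs⟩
  · exact Or.inl (subset_antisymm hTR (sdiff_eq_empty.mp h))
  · refine Or.inr ⟨s, (hs ▸ mem_singleton s : s ∈ R \ T).1, ?_⟩
    change R \ {s} = T
    rw [← hs, sdiff_sdiff_cancel_left hTR]

end Set

namespace SimpleGraph

variable {V : Type*} {G : SimpleGraph V} {v : V} {c : G.Walk v v}

lemma eq_spanningCoe_toSubgraph_of_edgeSet_eq (hG : G.edgeSet = c.edgeSet) :
    G = c.toSubgraph.spanningCoe := by
  rw [← edgeSet_inj, hG, Subgraph.edgeSet_spanningCoe, Walk.edgeSet_toSubgraph]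

lemma isCycles_of_edgeSet_eq (hc : c.IsCycle) (hG : G.edgeSet = c.edgeSet) : G.IsCycles := by
  rw [eq_spanningCoe_toSubgraph_of_edgeSet_eq hG]
  exact hc.isCycles_spanningCoe_toSubgraph

/-- A graph whose edges are those of one cycle contains no other cycle: each vertex of a cycle
`p` has degree two both in `p` and in `G`, so the vertices of `p` are closed under adjacency. -/
lemma Walk.IsCycle.mem_edges_of_edgeSet_eq (hc : c.IsCycle) (hG : G.edgeSet = c.edgeSet)
    {u : V} {p : G.Walk u u} (hp : p.IsCycle) {e : Sym2 V} (he : e ∈ G.edgeSet) :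
    e ∈ p.edges := by
  classical
  have : G.LocallyFinite := fun x => Set.Finite.fintype <| c.support.finite_toSet.subset
    fun y hy => c.snd_mem_support_of_mem_edges (hG ▸ (G.mem_edgeSet.mpr hy) : s(x, y) ∈ c.edgeSet)
  induction e with | _ a b =>
  have hu : u ∈ c.support := by
    have : s(u, p.snd) ∈ G.edgeSet := p.edges_subset_edgeSet (p.mk_start_snd_mem_edges hp.not_nil)
    exact c.fst_mem_support_of_mem_edges (hG ▸ this)
  have ha : a ∈ c.support := c.fst_mem_support_of_mem_edges (hG ▸ he)
  have hreach : G.Reachable u a :=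
    (c.takeUntil u hu).reachable.symm.trans (c.takeUntil a ha).reachable
  have hclosed : ∀ x ∈ p.toSubgraph.verts, ∀ y, G.Adj x y → p.toSubgraph.Adj x y :=
    fun x hx y => (hp.adj_toSubgraph_iff_of_isCycles (isCycles_of_edgeSet_eq hc hG) hx y).mpr
  have haverts : a ∈ p.toSubgraph.verts :=
    hreach.mem_subgraphVerts hclosed p.start_mem_verts_toSubgraph
  exact p.mem_edges_toSubgraph.mp (Subgraph.mem_edgeSet.mpr (hclosed a haverts b he))

lemma not_reachable_deleteEdges_pair_of_edgeSet_eq (hc : c.IsCycle) (hG : G.edgeSet = c.edgeSet)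
    {x y : V} (hxy : G.Adj x y) {e : Sym2 V} (he : e ∈ G.edgeSet) (hne : e ≠ s(x, y)) :
    ¬ (G.deleteEdges {s(x, y), e}).Reachable x y := by
  intro hreach
  set G' := G.deleteEdges {e}
  have hadj : G'.Adj x y := deleteEdges_adj.mpr ⟨hxy, Ne.symm hne⟩
  have hreach' : (G'.deleteEdges {s(x, y)}).Reachable x y := by
    rwa [deleteEdges_deleteEdges, Set.union_comm, Set.singleton_union]
  obtain ⟨u, p, hp, -⟩ := adj_and_reachable_delete_edges_iff_exists_cycle.mp ⟨hadj, hreach'⟩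
  have hep : e ∈ p.edges := by
    rw [← p.edges_mapLe_eq_edges (G.deleteEdges_le {e})]
    exact hc.mem_edges_of_edgeSet_eq hG (hp.mapLe _) he
  have := p.edges_subset_edgeSet hep
  simp [G', edgeSet_deleteEdges] at this

end SimpleGraph

section AtomJoins

variable {α : Type*} [DecidableEq α]

lemma pairSetoid_comm (x y : α) : pairSetoid x y = pairSetoid y x := by
  ext a b
  change _ ∨ _ ↔ _ ∨ _
  tauto

lemma pairSetoid_le_iff {x y : α} {s : Setoid α} : pairSetoid x y ≤ s ↔ s x y := by
  refine ⟨fun h => h (Or.inr (Or.inl ⟨rfl, rfl⟩)), fun h a b hab => ?_⟩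
  rcases hab with rfl | ⟨rfl, rfl⟩ | ⟨rfl, rfl⟩
  exacts [s.refl a, h, s.symm h]

/-- On the diagonal this is `⊥`, not an atom. -/
def edgeSetoid : Sym2 α → Setoid α := Sym2.lift ⟨pairSetoid, pairSetoid_comm⟩

@[simp]
lemma edgeSetoid_mk (x y : α) : edgeSetoid s(x, y) = pairSetoid x y := rfl

lemma edgeSetoid_injOn : Set.InjOn (edgeSetoid (α := α)) {e | ¬ e.IsDiag} := by
  intro e he e' _ h
  induction e with | _ x y =>
  induction e' with | _ a b =>
  have hrel : pairSetoid a b x y := by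
    rw [← edgeSetoid_mk, ← h]
    exact pairSetoid_le_iff.mp le_rfl
  rcases hrel with hxy | ⟨rfl, rfl⟩ | ⟨rfl, rfl⟩
  · exact absurd hxy he
  · rfl
  · exact Sym2.eq_swap

lemma exists_eq_pairSetoid_of_isAtom {s : Setoid α} (hs : IsAtom s) :
    ∃ x y, x ≠ y ∧ s = pairSetoid x y := by
  obtain ⟨x, y, hxy, hsxy⟩ : ∃ x y, x ≠ y ∧ s x y := by
    by_contra! h
    refine hs.1 (le_antisymm (fun a b hab => ?_) bot_le)
    by_contra hne
    exact h a b hne hab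
  have hne_bot : pairSetoid x y ≠ ⊥ := fun h => hxy (pairSetoid_le_iff.mp h.le)
  exact ⟨x, y, hxy, (hs.le_iff.mp (pairSetoid_le_iff.mpr hsxy)).resolve_left hne_bot |>.symm⟩

lemma sSup_eq_reachableSetoid {T : Set (Setoid α)} (hT : ∀ s ∈ T, IsAtom s) :
    sSup T = (atomGraph T).reachableSetoid := by
  refine le_antisymm (sSup_le fun s hs => ?_) fun a b hab => ?_
  · obtain ⟨x, y, hxy, rfl⟩ := exists_eq_pairSetoid_of_isAtom (hT s hs)
    exact pairSetoid_le_iff.mpr (SimpleGraph.Adj.reachable ⟨hxy, hs⟩)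
  · obtain ⟨p⟩ := hab
    induction p with
    | nil => exact (sSup T).refl _
    | cons h _ ih => exact (sSup T).trans (pairSetoid_le_iff.mp (le_sSup h.2)) ih

lemma pairSetoid_le_sSup_iff_reachable {T : Set (Setoid α)} (hT : ∀ s ∈ T, IsAtom s) {x y : α} :
    pairSetoid x y ≤ sSup T ↔ (atomGraph T).Reachable x y := by
  rw [sSup_eq_reachableSetoid hT, pairSetoid_le_iff]
  rfl

lemma atomGraph_le_deleteEdges {T R : Set (Setoid α)} (hTR : T ⊆ R) {E : Set (Sym2 α)}
    (hE : ∀ e ∈ E, edgeSetoid e ∉ T) : atomGraph T ≤ (atomGraph R).deleteEdges E :=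
  fun _ _ ⟨hab, hT⟩ => SimpleGraph.deleteEdges_adj.mpr ⟨⟨hab, hTR hT⟩, fun he => hE _ he hT⟩

lemma deleteEdges_atomGraph_le {R : Set (Setoid α)} {x y : α} (hxy : x ≠ y) :
    (atomGraph R).deleteEdges {s(x, y)} ≤ atomGraph (R \ {pairSetoid x y}) := by
  intro a b h
  obtain ⟨⟨hab, habR⟩, hne⟩ := SimpleGraph.deleteEdges_adj.mp h
  refine ⟨hab, habR, fun heq => hne (edgeSetoid_injOn ?_ ?_ heq)⟩
  exacts [Sym2.mk_isDiag_iff.not.mpr hab, Sym2.mk_isDiag_iff.not.mpr hxy]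

lemma image_edgeSetoid_edgeSet_atomGraph {R : Set (Setoid α)} (hR : ∀ s ∈ R, IsAtom s) :
    edgeSetoid '' (atomGraph R).edgeSet = R := by
  refine subset_antisymm ?_ fun s hs => ?_
  · rintro _ ⟨e, he, rfl⟩
    induction e with | _ x y => exact he.2
  · obtain ⟨x, y, hxy, rfl⟩ := exists_eq_pairSetoid_of_isAtom (hR s hs)
    exact ⟨s(x, y), ⟨hxy, hs⟩, rfl⟩

lemma ncard_eq_ncard_edgeSet_atomGraph {R : Set (Setoid α)} (hR : ∀ s ∈ R, IsAtom s) :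
    R.ncard = (atomGraph R).edgeSet.ncard := by
  conv_lhs => rw [← image_edgeSetoid_edgeSet_atomGraph hR]
  exact (edgeSetoid_injOn.mono fun _ => SimpleGraph.not_isDiag_of_mem_edgeSet _).ncard_image

end AtomJoins

section CycleOfAtoms

variable {α : Type*} [DecidableEq α] {R : Set (Setoid α)} {v : α} {c : (atomGraph R).Walk v v}

lemma sSup_sdiff_singleton_of_isCycle (hR : ∀ s ∈ R, IsAtom s) (hc : c.IsCycle)
    (hG : (atomGraph R).edgeSet = c.edgeSet) {s : Setoid α} (hs : s ∈ R) :
    sSup (R \ {s}) = sSup R := by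
  refine le_antisymm (sSup_le_sSup Set.sdiff_subset) (sSup_le fun t ht => ?_)
  obtain rfl | hts := eq_or_ne t s
  · obtain ⟨x, y, hxy, rfl⟩ := exists_eq_pairSetoid_of_isAtom (hR t ht)
    have hxyc : s(x, y) ∈ c.edgeSet := hG ▸ (⟨hxy, ht⟩ : (atomGraph R).Adj x y)
    rw [pairSetoid_le_sSup_iff_reachable fun u hu => hR u hu.1]
    exact ((SimpleGraph.adj_and_reachable_delete_edges_iff_exists_cycle.mpr
      ⟨v, c, hc, hxyc⟩).2).mono (deleteEdges_atomGraph_le hxy)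
  · exact le_sSup ⟨ht, hts⟩

/-- A path in `atomGraph T` joining the ends of a missing atom would close a cycle avoiding the
other missing atom. -/
lemma sep_le_sSup_eq_of_isCycle (hR : ∀ s ∈ R, IsAtom s) (hc : c.IsCycle)
    (hG : (atomGraph R).edgeSet = c.edgeSet) {T : Set (Setoid α)} (hTR : T ⊆ R)
    (hRT : (R \ T).Nontrivial) : {t ∈ R | t ≤ sSup T} = T := by
  refine subset_antisymm (fun t ⟨htR, hle⟩ => ?_) fun t ht => ⟨hTR ht, le_sSup ht⟩
  by_contra htT
  obtain ⟨s, ⟨hsR, hsT⟩, hst⟩ := hRT.exists_ne t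
  obtain ⟨x, y, hxy, rfl⟩ := exists_eq_pairSetoid_of_isAtom (hR _ htR)
  obtain ⟨x', y', hxy', rfl⟩ := exists_eq_pairSetoid_of_isAtom (hR _ hsR)
  rw [pairSetoid_le_sSup_iff_reachable fun u hu => hR u (hTR hu)] at hle
  refine SimpleGraph.not_reachable_deleteEdges_pair_of_edgeSet_eq hc hG (e := s(x', y'))
    ⟨hxy, htR⟩ ⟨hxy', hsR⟩ (fun h => hst (congrArg edgeSetoid h)) (hle.mono ?_)
  refine atomGraph_le_deleteEdges hTR fun e he => ?_
  rcases he with rfl | rfl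
  exacts [htT, hsT]

end CycleOfAtoms

theorem joins_of_cycle_general (R : Set (Setoid X)) (m : ℕ)
    (hR : ∀ a ∈ R, IsAtom a)
    (hcycle : ∃ (v : X) (c : (atomGraph R).Walk v v), c.IsCycle ∧ c.length = m ∧
      (atomGraph R).edgeSet = {e | e ∈ c.edges})
    (hm : (atomGraph R).edgeSet.ncard = m) :
    {π : Setoid X | ∃ T ⊆ R, sSup T = π}.ncard = 2 ^ m - m := by
  obtain ⟨v, c, hc, -, hG⟩ := hcycle
  have hRfin : R.Finite := image_edgeSetoid_edgeSet_atomGraph hR ▸ (Set.toFinite _).image _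
  have hRcard : R.ncard = m := (ncard_eq_ncard_edgeSet_atomGraph hR).trans hm
  set B := insert R ((fun s => R \ {s}) '' R)
  have hBR : B ⊆ 𝒫 R := Set.insert_subset (Set.mem_powerset subset_rfl)
    (Set.image_subset_iff.mpr fun _ _ => Set.sdiff_subset)
  have hrecover : ∀ T ∈ 𝒫 R \ B, {t ∈ R | t ≤ sSup T} = T := fun T hT =>
    sep_le_sSup_eq_of_isCycle hR hc hG hT.1
      (Set.nontrivial_sdiff_of_notMem_insert_image hT.1 hT.2)
  have hcount := Set.ncard_image_eq_of_injOn_sdiff (f := sSup) hRfin.powerset hBR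
    (Set.mem_insert R _) ?collapse ?inj ?top
  case collapse =>
    rintro _ (rfl | ⟨s, hs, rfl⟩)
    exacts [rfl, sSup_sdiff_singleton_of_isCycle hR hc hG hs]
  case inj =>
    intro T hT T' hT' h
    rw [← hrecover T hT, ← hrecover T' hT', h]
  case top =>
    intro T hT h
    refine hT.2 (Or.inl ?_)
    rw [← hrecover T hT, h]
    exact Set.sep_eq_self_iff_mem_true.mpr fun _ => le_sSup
  change (sSup '' 𝒫 R).ncard = _
  rw [hcount, Set.ncard_powerset R hRfin, Set.ncard_insert_image_sdiff_singleton hRfin, hRcard]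
  have := Nat.lt_two_pow_self (n := m)
  omega

/-- If the graph of a set `R` of atoms is a single cycle with `m ≥ 3` edges,
then the number of partitions expressible as the join of a subset of `R` equals `2^m - m`. -/
theorem joins_of_cycle (R : Set (Setoid X)) (m : ℕ) (hm3 : 3 ≤ m)
    (hR : ∀ a ∈ R, IsAtom a)
    (hcycle : ∃ (v : X) (c : (atomGraph R).Walk v v), c.IsCycle ∧ c.length = m ∧
      (atomGraph R).edgeSet = {e | e ∈ c.edges})
    (hm : (atomGraph R).edgeSet.ncard = m) :
    {π : Setoid X | ∃ T ⊆ R, sSup T = π}.ncard = 2 ^ m - m :=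
  joins_of_cycle_general R m hR hcycle hm
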